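/- The group presented by generators a, b subject to the relations a^2 = b^3 = (a*b)^5 = 1 is isomorphic to the alternating group A_5. -/
import Mathlib

namespace Stmt7

local notation "a" => FreeGroup.of (0 : Fin 2)
local notation "b" => FreeGroup.of (1 : Fin 2)

def rels : Set (FreeGroup (Fin 2)) := {a ^ 2, b ^ 3, (a * b) ^ 5}

abbrev P := PresentedGroup rels

def X : P := PresentedGroup.of 0
def Y : P := PresentedGroup.of 1

lemma relmk (r : FreeGroup (Fin 2)) (h : r ∈ rels) : PresentedGroup.mk rels r = 1 :=
  (QuotientGroup.eq_one_iff _).mpr (Subgroup.subset_normalClosure h)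

lemma ha : X * X = 1 := by
  have h := relmk (a ^ 2) (Set.mem_insert _ _)
  rw [map_pow, pow_two] at h
  exact h

lemma hb3 : Y * Y * Y = 1 := by
  have h := relmk (b ^ 3) (Set.mem_insert_of_mem _ (Set.mem_insert _ _))
  rw [map_pow] at h
  calc Y * Y * Y = (PresentedGroup.mk rels b) ^ 3 := by
        rw [pow_succ, pow_succ, pow_one]; rfl
    _ = 1 := h

lemma hab5 : (X * Y) ^ 5 = 1 := by
  have h := relmk ((a * b) ^ 5)
    (Set.mem_insert_of_mem _ (Set.mem_insert_of_mem _ rfl))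
  rw [map_pow, map_mul] at h
  exact h

lemma r2 (t : P) : t * X * X = t := by rw [mul_assoc, ha, mul_one]

lemma r3 (t : P) : t * Y * Y * Y = t := by
  rw [mul_assoc, mul_assoc, ← mul_assoc Y Y Y, hb3, mul_one]

lemma r10ab (t : P) : t * X * Y * X * Y * X * Y * X * Y * X * Y = t := by
  calc t * X * Y * X * Y * X * Y * X * Y * X * Y = t * (X * Y) ^ 5 := by
        simp [pow_succ, mul_assoc]
    _ = t := by rw [hab5, mul_one]

lemma r10ba (t : P) : t * Y * X * Y * X * Y * X * Y * X * Y * X = t := by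
  calc t * Y * X * Y * X * Y * X * Y * X * Y * X = t * Y * (X * Y) ^ 5 * Y⁻¹ := by
        simp [pow_succ, mul_assoc]
    _ = t := by rw [hab5, mul_one, mul_inv_cancel_right]

def Ap : alternatingGroup (Fin 5) :=
  ⟨Equiv.swap 0 1 * Equiv.swap 2 3, Equiv.Perm.mem_alternatingGroup.mpr (by decide)⟩
def Bp : alternatingGroup (Fin 5) :=
  ⟨Equiv.swap 0 2 * Equiv.swap 2 4, Equiv.Perm.mem_alternatingGroup.mpr (by decide)⟩

def fgen : Fin 2 → alternatingGroup (Fin 5) := ![Ap, Bp]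

lemma hrels : ∀ r ∈ rels, FreeGroup.lift fgen r = 1 := by
  intro r hr
  rcases hr with rfl | rfl | rfl <;> decide

def phi : P →* alternatingGroup (Fin 5) := PresentedGroup.toGroup hrels


def c0 : P := 1
def c1 : P := c0 * X
def c2 : P := c0 * Y
def c3 : P := c1 * Y
def c4 : P := c2 * X
def c5 : P := c2 * Y
def c6 : P := c3 * X
def c7 : P := c3 * Y
def c8 : P := c4 * Y
def c9 : P := c5 * X
def c10 : P := c6 * Y
def c11 : P := c7 * X
def c12 : P := c8 * X
def c13 : P := c8 * Y
def c14 : P := c9 * Y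
def c15 : P := c10 * X
def c16 : P := c10 * Y
def c17 : P := c11 * Y
def c18 : P := c12 * Y
def c19 : P := c13 * X
def c20 : P := c14 * X
def c21 : P := c14 * Y
def c22 : P := c15 * Y
def c23 : P := c16 * X
def c24 : P := c17 * X
def c25 : P := c17 * Y
def c26 : P := c18 * Y
def c27 : P := c19 * Y
def c28 : P := c20 * Y
def c29 : P := c22 * Y
def c30 : P := c23 * Y
def c31 : P := c24 * Y
def c32 : P := c26 * X
def c33 : P := c27 * X
def c34 : P := c27 * Y
def c35 : P := c28 * Y
def c36 : P := c29 * X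
def c37 : P := c30 * X
def c38 : P := c30 * Y
def c39 : P := c31 * Y
def c40 : P := c32 * Y
def c41 : P := c33 * Y
def c42 : P := c35 * X
def c43 : P := c36 * Y
def c44 : P := c37 * Y
def c45 : P := c39 * X
def c46 : P := c40 * X
def c47 : P := c40 * Y
def c48 : P := c41 * Y
def c49 : P := c42 * Y
def c50 : P := c43 * X
def c51 : P := c43 * Y
def c52 : P := c44 * Y
def c53 : P := c45 * Y
def c54 : P := c48 * X
def c55 : P := c49 * X
def c56 : P := c52 * X
def c57 : P := c53 * X
def c58 : P := c54 * Y
def c59 : P := c56 * Y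
lemma eX0 : c0 * X = c1 := rfl
lemma eY0 : c0 * Y = c2 := rfl
lemma eY1 : c1 * Y = c3 := rfl
lemma eX2 : c2 * X = c4 := rfl
lemma eY2 : c2 * Y = c5 := rfl
lemma eX3 : c3 * X = c6 := rfl
lemma eY3 : c3 * Y = c7 := rfl
lemma eY4 : c4 * Y = c8 := rfl
lemma eX5 : c5 * X = c9 := rfl
lemma eY6 : c6 * Y = c10 := rfl
lemma eX7 : c7 * X = c11 := rfl
lemma eX8 : c8 * X = c12 := rfl
lemma eY8 : c8 * Y = c13 := rfl
lemma eY9 : c9 * Y = c14 := rfl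
lemma eX10 : c10 * X = c15 := rfl
lemma eY10 : c10 * Y = c16 := rfl
lemma eY11 : c11 * Y = c17 := rfl
lemma eY12 : c12 * Y = c18 := rfl
lemma eX13 : c13 * X = c19 := rfl
lemma eX14 : c14 * X = c20 := rfl
lemma eY14 : c14 * Y = c21 := rfl
lemma eY15 : c15 * Y = c22 := rfl
lemma eX16 : c16 * X = c23 := rfl
lemma eX17 : c17 * X = c24 := rfl
lemma eY17 : c17 * Y = c25 := rfl
lemma eY18 : c18 * Y = c26 := rfl
lemma eY19 : c19 * Y = c27 := rfl
lemma eY20 : c20 * Y = c28 := rfl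
lemma eY22 : c22 * Y = c29 := rfl
lemma eY23 : c23 * Y = c30 := rfl
lemma eY24 : c24 * Y = c31 := rfl
lemma eX26 : c26 * X = c32 := rfl
lemma eX27 : c27 * X = c33 := rfl
lemma eY27 : c27 * Y = c34 := rfl
lemma eY28 : c28 * Y = c35 := rfl
lemma eX29 : c29 * X = c36 := rfl
lemma eX30 : c30 * X = c37 := rfl
lemma eY30 : c30 * Y = c38 := rfl
lemma eY31 : c31 * Y = c39 := rfl
lemma eY32 : c32 * Y = c40 := rfl
lemma eY33 : c33 * Y = c41 := rfl
lemma eX35 : c35 * X = c42 := rfl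
lemma eY36 : c36 * Y = c43 := rfl
lemma eY37 : c37 * Y = c44 := rfl
lemma eX39 : c39 * X = c45 := rfl
lemma eX40 : c40 * X = c46 := rfl
lemma eY40 : c40 * Y = c47 := rfl
lemma eY41 : c41 * Y = c48 := rfl
lemma eY42 : c42 * Y = c49 := rfl
lemma eX43 : c43 * X = c50 := rfl
lemma eY43 : c43 * Y = c51 := rfl
lemma eY44 : c44 * Y = c52 := rfl
lemma eY45 : c45 * Y = c53 := rfl
lemma eX48 : c48 * X = c54 := rfl
lemma eX49 : c49 * X = c55 := rfl
lemma eX52 : c52 * X = c56 := rfl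
lemma eX53 : c53 * X = c57 := rfl
lemma eY54 : c54 * Y = c58 := rfl
lemma eY56 : c56 * Y = c59 := rfl
lemma eX1 : c1 * X = c0 := by
  rw [← eX0]
  exact r2 c0
lemma eX4 : c4 * X = c2 := by
  rw [← eX2]
  exact r2 c2
lemma eY5 : c5 * Y = c0 := by
  rw [← eY2, ← eY0]
  exact r3 c0
lemma eX6 : c6 * X = c3 := by
  rw [← eX3]
  exact r2 c3
lemma eY7 : c7 * Y = c1 := by
  rw [← eY3, ← eY1]
  exact r3 c1
lemma eX9 : c9 * X = c5 := by
  rw [← eX5]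
  exact r2 c5
lemma eX11 : c11 * X = c7 := by
  rw [← eX7]
  exact r2 c7
lemma eX12 : c12 * X = c8 := by
  rw [← eX8]
  exact r2 c8
lemma eY13 : c13 * Y = c4 := by
  rw [← eY8, ← eY4]
  exact r3 c4
lemma eX15 : c15 * X = c10 := by
  rw [← eX10]
  exact r2 c10
lemma eY16 : c16 * Y = c6 := by
  rw [← eY10, ← eY6]
  exact r3 c6
lemma eX19 : c19 * X = c13 := by
  rw [← eX13]
  exact r2 c13
lemma eX20 : c20 * X = c14 := by
  rw [← eX14]
  exact r2 c14
lemma eY21 : c21 * Y = c9 := by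
  rw [← eY14, ← eY9]
  exact r3 c9
lemma eX22 : c22 * X = c21 := by
  rw [← eY15, ← eX10, ← eY6, ← eX3, ← eY1, ← eX0, ← eY5, ← eX9, ← eY21]
  exact r10ba c21
lemma eX23 : c23 * X = c16 := by
  rw [← eX16]
  exact r2 c16
lemma eX24 : c24 * X = c17 := by
  rw [← eX17]
  exact r2 c17
lemma eY25 : c25 * Y = c11 := by
  rw [← eY17, ← eY11]
  exact r3 c11
lemma eY26 : c26 * Y = c12 := by
  rw [← eY18, ← eY12]
  exact r3 c12
lemma eY29 : c29 * Y = c15 := by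
  rw [← eY22, ← eY15]
  exact r3 c15
lemma eX32 : c32 * X = c26 := by
  rw [← eX26]
  exact r2 c26
lemma eX33 : c33 * X = c27 := by
  rw [← eX27]
  exact r2 c27
lemma eY34 : c34 * Y = c19 := by
  rw [← eY27, ← eY19]
  exact r3 c19
lemma eY35 : c35 * Y = c20 := by
  rw [← eY28, ← eY20]
  exact r3 c20
lemma eX36 : c36 * X = c29 := by
  rw [← eX29]
  exact r2 c29
lemma eX37 : c37 * X = c30 := by
  rw [← eX30]
  exact r2 c30
lemma eY38 : c38 * Y = c23 := by
  rw [← eY30, ← eY23]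
  exact r3 c23
lemma eY39 : c39 * Y = c24 := by
  rw [← eY31, ← eY24]
  exact r3 c24
lemma eX42 : c42 * X = c35 := by
  rw [← eX35]
  exact r2 c35
lemma eX45 : c45 * X = c39 := by
  rw [← eX39]
  exact r2 c39
lemma eX46 : c46 * X = c40 := by
  rw [← eX40]
  exact r2 c40
lemma eY47 : c47 * Y = c32 := by
  rw [← eY40, ← eY32]
  exact r3 c32
lemma eY48 : c48 * Y = c33 := by
  rw [← eY41, ← eY33]
  exact r3 c33
lemma eX50 : c50 * X = c43 := by
  rw [← eX43]
  exact r2 c43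
lemma eY51 : c51 * Y = c36 := by
  rw [← eY43, ← eY36]
  exact r3 c36
lemma eY52 : c52 * Y = c37 := by
  rw [← eY44, ← eY37]
  exact r3 c37
lemma eX54 : c54 * X = c48 := by
  rw [← eX48]
  exact r2 c48
lemma eX55 : c55 * X = c49 := by
  rw [← eX49]
  exact r2 c49
lemma eX56 : c56 * X = c52 := by
  rw [← eX52]
  exact r2 c52
lemma eX57 : c57 * X = c53 := by
  rw [← eX53]
  exact r2 c53
lemma eX18 : c18 * X = c25 := by
  rw [← eY12, ← eX8, ← eY4, ← eX2, ← eY0, ← eX1, ← eY7, ← eX11, ← eY25]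
  exact r10ba c25
lemma eX21 : c21 * X = c22 := by
  rw [← eX22]
  exact r2 c22
lemma eX25 : c25 * X = c18 := by
  rw [← eX18]
  exact r2 c18
lemma eX28 : c28 * X = c34 := by
  rw [← eY20, ← eX14, ← eY9, ← eX5, ← eY2, ← eX4, ← eY13, ← eX19, ← eY34]
  exact r10ba c34
lemma eX31 : c31 * X = c38 := by
  rw [← eY24, ← eX17, ← eY11, ← eX7, ← eY3, ← eX6, ← eY16, ← eX23, ← eY38]
  exact r10ba c38
lemma eX34 : c34 * X = c28 := by
  rw [← eX28]
  exact r2 c28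
lemma eX38 : c38 * X = c31 := by
  rw [← eX31]
  exact r2 c31
lemma eX41 : c41 * X = c47 := by
  rw [← eY33, ← eX27, ← eY19, ← eX13, ← eY8, ← eX12, ← eY26, ← eX32, ← eY47]
  exact r10ba c47
lemma eX44 : c44 * X = c51 := by
  rw [← eY37, ← eX30, ← eY23, ← eX16, ← eY10, ← eX15, ← eY29, ← eX36, ← eY51]
  exact r10ba c51
lemma eY46 : c46 * Y = c45 := by
  rw [← eX40, ← eY32, ← eX26, ← eY18, ← eX25, ← eY17, ← eX24, ← eY39, ← eX45]
  exact r10ab c45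
lemma eX47 : c47 * X = c41 := by
  rw [← eX41]
  exact r2 c41
lemma eY50 : c50 * Y = c42 := by
  rw [← eX43, ← eY36, ← eX29, ← eY22, ← eX21, ← eY14, ← eX20, ← eY35, ← eX42]
  exact r10ab c42
lemma eX51 : c51 * X = c44 := by
  rw [← eX44]
  exact r2 c44
lemma eY53 : c53 * Y = c46 := by
  rw [← eY45, ← eY46]
  exact r3 c46
lemma eY55 : c55 * Y = c54 := by
  rw [← eX49, ← eY42, ← eX35, ← eY28, ← eX34, ← eY27, ← eX33, ← eY48, ← eX54]
  exact r10ab c54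
lemma eY57 : c57 * Y = c56 := by
  rw [← eX53, ← eY45, ← eX39, ← eY31, ← eX38, ← eY30, ← eX37, ← eY52, ← eX56]
  exact r10ab c56
lemma eY58 : c58 * Y = c55 := by
  rw [← eY54, ← eY55]
  exact r3 c55
lemma eY59 : c59 * Y = c57 := by
  rw [← eY56, ← eY57]
  exact r3 c57
lemma eY49 : c49 * Y = c50 := by
  rw [← eY42, ← eY50]
  exact r3 c50
lemma eX58 : c58 * X = c59 := by
  rw [← eY54, ← eX48, ← eY41, ← eX47, ← eY40, ← eX46, ← eY53, ← eX57, ← eY59]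
  exact r10ba c59
lemma eX59 : c59 * X = c58 := by
  rw [← eX58]
  exact r2 c58
def c : Fin 60 → P := ![c0, c1, c2, c3, c4, c5, c6, c7, c8, c9, c10, c11, c12, c13, c14, c15, c16, c17, c18, c19, c20, c21, c22, c23, c24, c25, c26, c27, c28, c29, c30, c31, c32, c33, c34, c35, c36, c37, c38, c39, c40, c41, c42, c43, c44, c45, c46, c47, c48, c49, c50, c51, c52, c53, c54, c55, c56, c57, c58, c59]
lemma stepX : ∀ i : Fin 60, ∃ j : Fin 60, c i * X = c j := by
  intro i; fin_cases i
  exacts [⟨1, eX0⟩, ⟨0, eX1⟩, ⟨4, eX2⟩, ⟨6, eX3⟩, ⟨2, eX4⟩, ⟨9, eX5⟩, ⟨3, eX6⟩, ⟨11, eX7⟩, ⟨12, eX8⟩, ⟨5, eX9⟩, ⟨15, eX10⟩, ⟨7, eX11⟩, ⟨8, eX12⟩, ⟨19, eX13⟩, ⟨20, eX14⟩, ⟨10, eX15⟩, ⟨23, eX16⟩, ⟨24, eX17⟩, ⟨25, eX18⟩, ⟨13, eX19⟩, ⟨14, eX20⟩, ⟨22, eX21⟩, ⟨21, eX22⟩,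 ⟨16, eX23⟩, ⟨17, eX24⟩, ⟨18, eX25⟩, ⟨32, eX26⟩, ⟨33, eX27⟩, ⟨34, eX28⟩, ⟨36, eX29⟩, ⟨37, eX30⟩, ⟨38, eX31⟩, ⟨26, eX32⟩, ⟨27, eX33⟩, ⟨28, eX34⟩, ⟨42, eX35⟩, ⟨29, eX36⟩, ⟨30, eX37⟩, ⟨31, eX38⟩, ⟨45, eX39⟩, ⟨46, eX40⟩, ⟨47, eX41⟩, ⟨35, eX42⟩, ⟨50, eX43⟩, ⟨51, eX44⟩, ⟨39, eX45⟩, ⟨40, eX46⟩, ⟨41, eX47⟩, ⟨54, eX48⟩, ⟨55, eX49⟩, ⟨43, eX50⟩, ⟨44, eX51⟩, ⟨56, eX52⟩, ⟨57, eX53⟩, ⟨48, eX54⟩, ⟨49, eX55⟩, ⟨52, eX56⟩, ⟨53, eX57⟩, ⟨59, eX58⟩, ⟨58, eX59⟩]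
lemma stepY : ∀ i : Fin 60, ∃ j : Fin 60, c i * Y = c j := by
  intro i; fin_cases i
  exacts [⟨2, eY0⟩, ⟨3, eY1⟩, ⟨5, eY2⟩, ⟨7, eY3⟩, ⟨8, eY4⟩, ⟨0, eY5⟩, ⟨10, eY6⟩, ⟨1, eY7⟩, ⟨13, eY8⟩, ⟨14, eY9⟩, ⟨16, eY10⟩, ⟨17, eY11⟩, ⟨18, eY12⟩, ⟨4, eY13⟩, ⟨21, eY14⟩, ⟨22, eY15⟩, ⟨6, eY16⟩, ⟨25, eY17⟩, ⟨26, eY18⟩, ⟨27, eY19⟩, ⟨28, eY20⟩, ⟨9, eY21⟩, ⟨29, eY22⟩, ⟨30, eY23⟩, ⟨31, eY24⟩, ⟨11, eY25⟩, ⟨12, eY26⟩, ⟨34, eY27⟩, ⟨35, eY28⟩, ⟨15, eY29⟩, ⟨38, eY30⟩, ⟨39, eY31⟩, ⟨40, eY32⟩, ⟨41, eY33⟩, ⟨19, eY34⟩, ⟨20, eY35⟩, ⟨43, eY36⟩, ⟨44, eY37⟩, ⟨23, eY38⟩, ⟨24, eY39⟩, ⟨47, eY40⟩, ⟨48, eY41⟩,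 ⟨49, eY42⟩, ⟨51, eY43⟩, ⟨52, eY44⟩, ⟨53, eY45⟩, ⟨45, eY46⟩, ⟨32, eY47⟩, ⟨33, eY48⟩, ⟨50, eY49⟩, ⟨42, eY50⟩, ⟨36, eY51⟩, ⟨37, eY52⟩, ⟨46, eY53⟩, ⟨58, eY54⟩, ⟨54, eY55⟩, ⟨59, eY56⟩, ⟨56, eY57⟩, ⟨55, eY58⟩, ⟨57, eY59⟩]

lemma hXinv : X⁻¹ = X := inv_eq_of_mul_eq_one_right ha

lemma hYinv : Y⁻¹ = Y * Y := inv_eq_of_mul_eq_one_right (by rw [← mul_assoc]; exact hb3)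

lemma cover_aux : ∀ (w : FreeGroup (Fin 2)) (i : Fin 60),
    ∃ j : Fin 60, c i * PresentedGroup.mk rels w = c j := by
  intro w
  refine FreeGroup.induction_on w ?_ ?_ ?_ ?_
  · intro i; exact ⟨i, by rw [map_one, mul_one]⟩
  · intro g i
    fin_cases g
    · exact stepX i
    · exact stepY i
  · intro g _ i
    fin_cases g
    · rw [map_inv]
      show ∃ j : Fin 60, c i * X⁻¹ = c j
      rw [hXinv]; exact stepX i
    · rw [map_inv]
      show ∃ j : Fin 60, c i * Y⁻¹ = c j
      rw [hYinv]
      obtain ⟨j1, h1⟩ := stepY i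
      obtain ⟨j2, h2⟩ := stepY j1
      exact ⟨j2, by rw [← mul_assoc, h1, h2]⟩
  · intro u v hu hv i
    obtain ⟨j, hj⟩ := hu i
    obtain ⟨k, hk⟩ := hv j
    exact ⟨k, by rw [map_mul, ← mul_assoc, hj, hk]⟩

lemma cover : ∀ p : P, ∃ i : Fin 60, c i = p := by
  intro p
  obtain ⟨w, rfl⟩ := PresentedGroup.mk_surjective rels p
  obtain ⟨j, hj⟩ := cover_aux w 0
  refine ⟨j, ?_⟩
  rw [← hj, show (c (0 : Fin 60)) = 1 from rfl, one_mul]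

set_option maxRecDepth 40000 in
lemma hinj : ∀ i j : Fin 60, phi (c i) = phi (c j) → i = j := by decide

set_option maxRecDepth 40000 in
lemma hsurj : ∀ g : alternatingGroup (Fin 5), ∃ i : Fin 60, phi (c i) = g := by decide

theorem presentation_A5 :
    Nonempty (PresentedGroup rels ≃* alternatingGroup (Fin 5)) := by
  refine ⟨MulEquiv.ofBijective phi ⟨?_, ?_⟩⟩
  · intro p q h
    obtain ⟨i, hi⟩ := cover p
    obtain ⟨j, hj⟩ := cover q
    rw [← hi, ← hj] at h ⊢
    rw [hinj i j h]
  · intro g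
    obtain ⟨i, hi⟩ := hsurj g
    exact ⟨c i, hi⟩

end Stmt7
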